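/- Staggered divergence equals average of nodal divergences: let B^n : ℤ² → ℝ² be a nodal grid vector field and define the staggered values by the four-point average B^n_{stag}(i,j) = ¼(B^n(i,j) + B^n(i+1,j) + B^n(i,j+1) + B^n(i+1,j+1)), and define B^{n+1}_{stag} from B^n_{stag} by the CTM update B^{n+1}_{stag,x}(i,j) = B^n_{stag,x}(i,j) − (Δt/(2Δy))(Ω(i,j+1) − Ω(i,j−1)), B^{n+1}_{stag,y}(i,j) = B^n_{stag,y}(i,j) + (Δt/(2Δx))(Ω(i+1,j) − Ω(i−1,j)) with arbitrary Ω : ℤ² → ℝ. Then for every (i,j), (div B^{n+1}_{stag})(i,j) = ¼[(div B^n)(i,j) + (div B^n)(i+1,j) + (div B^n)(i,j+1) + (div B^n)(i+1,j+1)]. -/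
import Mathlib


/-- Discrete central-difference divergence of a grid vector field `B : ℤ² → ℝ²`:
`(div B)(i,j) = (B_x(i+1,j) − B_x(i−1,j))/(2Δx) + (B_y(i,j+1) − B_y(i,j−1))/(2Δy)`. -/
noncomputable def ddiv (Δx Δy : ℝ) (B : ℤ → ℤ → ℝ × ℝ) (i j : ℤ) : ℝ :=
  ((B (i + 1) j).1 - (B (i - 1) j).1) / (2 * Δx)
    + ((B i (j + 1)).2 - (B i (j - 1)).2) / (2 * Δy)

/-- Four-point average of nodal data onto the staggered node `(i+½,j+½)` indexed by
`(i,j)`. -/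
noncomputable def stagAvg (B : ℤ → ℤ → ℝ × ℝ) : ℤ → ℤ → ℝ × ℝ := fun i j =>
  (1 / 4 : ℝ) • (B i j + B (i + 1) j + B i (j + 1) + B (i + 1) (j + 1))

/-- The CTM update of a staggered grid vector field with electromotive values `Ω`. -/
noncomputable def ctmUpdate (Δx Δy Δt : ℝ) (B : ℤ → ℤ → ℝ × ℝ) (Ω : ℤ → ℤ → ℝ) :
    ℤ → ℤ → ℝ × ℝ := fun i j =>
  ((B i j).1 - Δt / (2 * Δy) * (Ω i (j + 1) - Ω i (j - 1)),
   (B i j).2 + Δt / (2 * Δx) * (Ω (i + 1) j - Ω (i - 1) j))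

/-- The discrete divergence of the CTM-updated staggered field (obtained
by four-point averaging of a nodal field `B^n` followed by the CTM update) equals the
four-point average of the nodal discrete divergences of `B^n`. -/
theorem staggered_divergence_is_average (Δx Δy Δt : ℝ)
    (hΔx : 0 < Δx) (hΔy : 0 < Δy) (hΔt : 0 < Δt)
    (Bn : ℤ → ℤ → ℝ × ℝ) (Ω : ℤ → ℤ → ℝ) :
    ∀ i j : ℤ,
      ddiv Δx Δy (ctmUpdate Δx Δy Δt (stagAvg Bn) Ω) i j
        = (1 / 4) * (ddiv Δx Δy Bn i j + ddiv Δx Δy Bn (i + 1) j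
            + ddiv Δx Δy Bn i (j + 1) + ddiv Δx Δy Bn (i + 1) (j + 1)) := by
  intro i j
  simp only [ddiv, ctmUpdate, stagAvg, Prod.smul_fst, Prod.smul_snd, Prod.fst_add,
    Prod.snd_add, smul_eq_mul]
  have h1 : i + 1 + 1 = i + 2 := by ring
  have h2 : i - 1 + 1 = i := by ring
  have h3 : j + 1 + 1 = j + 2 := by ring
  have h4 : j - 1 + 1 = j := by ring
  have h5 : i + 1 - 1 = i := by ring
  have h6 : j + 1 - 1 = j := by ring
  simp only [h1, h2, h3, h4, h5, h6]
  field_simp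
  ring
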